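/- Let p₁, …, p_r be distinct odd primes, e₁, …, e_r ≥ 1 integers, and N = p₁^{e₁}·…·p_r^{e_r}. Let D ∈ ℤ/Nℤ be such that its reduction modulo p_i is a non-square in ℤ/p_iℤ for every i = 1, …, r. Then for every (x,y) ∈ H_{D,ℤ/Nℤ}, the Ψ(N)-th ⊗-power of (x,y) equals (1,0), where Ψ(N) = p₁^{e₁−1}(p₁ + 1)·…·p_r^{e_r−1}(p_r + 1). -/

import Mathlib

/-!
Points of the Pell conic are the norm-one elements of the quadratic algebra `(ℤ/Nℤ)[√D]`, and
the Brahmagupta product is its multiplication. Modulo a prime `p ∣ N` the algebra becomes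
`𝔽_p[√D]`; since `D` is a non-square, `D ^ ((p-1)/2) = -1`, so Frobenius sends `√D` to `-√D`
and is conjugation. Hence `z ^ (p+1) = z · z̄ = norm z = 1` modulo `p`. Raising to the power
`p ^ (e-1)` lifts this congruence to one modulo `p ^ e`, and as the `pᵢ ^ eᵢ` are pairwise
coprime with product `N = 0`, the congruences modulo all of them give `z ^ Ψ(N) = 1`.
-/

/-- The Brahmagupta (Pell) product on `R × R`. -/
def pellMul {R : Type*} [CommRing R] (D : R) (P Q : R × R) : R × R :=
  (P.1 * Q.1 + D * P.2 * Q.2, P.2 * Q.1 + P.1 * Q.2)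

/-- `n`-th power with respect to the Brahmagupta product (identity `(1,0)`). -/
def pellPow {R : Type*} [CommRing R] (D : R) (P : R × R) : ℕ → R × R
  | 0 => (1, 0)
  | n + 1 => pellMul D P (pellPow D P n)

/-- The Pell conic `H_{D,R} = {(x, y) : x² − D y² = 1}`. -/
def pellConic {R : Type*} [CommRing R] (D : R) : Set (R × R) :=
  {P | P.1 ^ 2 - D * P.2 ^ 2 = 1}

theorem ZMod.natCast_dvd_of_castHom_eq_zero {m n : ℕ} (h : m ∣ n) {x : ZMod n}
    (hx : ZMod.castHom h (ZMod m) x = 0) : (m : ZMod n) ∣ x := by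
  rw [← ZMod.intCast_zmod_cast x, map_intCast, ZMod.intCast_zmod_eq_zero_iff_dvd] at hx
  obtain ⟨k, hk⟩ := hx
  exact ⟨k, by rw [← ZMod.intCast_zmod_cast x, hk]; push_cast; ring⟩

theorem eq_zero_of_forall_natCast_dvd {A ι : Type*} [CommRing A] [Fintype ι] (m : ι → ℕ)
    (hm : Pairwise fun i j => (m i).Coprime (m j)) (hA : ((∏ i, m i : ℕ) : A) = 0) {x : A}
    (hx : ∀ i, (m i : A) ∣ x) : x = 0 := by
  have := Fintype.prod_dvd_of_coprime (fun i j hij => (hm hij).cast) hx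
  rwa [← Nat.cast_prod, hA, zero_dvd_iff] at this

namespace QuadraticAlgebra

section map

variable {R S : Type*} [CommRing R] [CommRing S] {a b : R} {a' b' : S}
  (f : R →+* S) (ha : f a = a') (hb : f b = b')

/- The target parameters are given by equations so that the reduction of
`QuadraticAlgebra R D 0` can land in `QuadraticAlgebra S (f D) 0` rather than in
`QuadraticAlgebra S (f D) (f 0)`. -/
def map : QuadraticAlgebra R a b →+* QuadraticAlgebra S a' b' where
  toFun z := ⟨f z.re, f z.im⟩
  map_one' := by ext <;> simp
  map_mul' z w := by ext <;> simp [← ha, ← hb]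
  map_zero' := by ext <;> simp
  map_add' z w := by ext <;> simp

@[simp] theorem re_map (z : QuadraticAlgebra R a b) : (map f ha hb z).re = f z.re := rfl

@[simp] theorem im_map (z : QuadraticAlgebra R a b) : (map f ha hb z).im = f z.im := rfl

@[simp] theorem map_algebraMap (r : R) :
    map f ha hb (algebraMap R _ r) = algebraMap S _ (f r) := by
  ext <;> simp

@[simp] theorem norm_map (z : QuadraticAlgebra R a b) : norm (map f ha hb z) = f (norm z) := by
  simp [norm_def, ← ha, ← hb]

end map

theorem natCast_dvd_of_map_castHom_eq_zero {m n : ℕ} (h : m ∣ n) {a b : ZMod n} {a' b' : ZMod m}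
    (ha : ZMod.castHom h (ZMod m) a = a') (hb : ZMod.castHom h (ZMod m) b = b')
    {z : QuadraticAlgebra (ZMod n) a b} (hz : map (ZMod.castHom h (ZMod m)) ha hb z = 0) :
    (m : QuadraticAlgebra (ZMod n) a b) ∣ z := by
  obtain ⟨x, hx⟩ := ZMod.natCast_dvd_of_castHom_eq_zero h (congrArg re hz)
  obtain ⟨y, hy⟩ := ZMod.natCast_dvd_of_castHom_eq_zero h (congrArg im hz)
  exact ⟨⟨x, y⟩, by ext <;> simp [hx, hy]⟩

section PrimeField

variable {p : ℕ} [Fact p.Prime] {D : ZMod p}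

theorem omega_pow_card (hp2 : p ≠ 2) (hD : ¬IsSquare D) :
    (ω : QuadraticAlgebra (ZMod p) D 0) ^ p = -ω := by
  have hD0 : D ≠ 0 := by rintro rfl; exact hD ⟨0, by ring⟩
  have hEuler : D ^ (p / 2) = -1 :=
    (ZMod.pow_div_two_eq_neg_one_or_one p hD0).resolve_left
      fun h => hD ((ZMod.euler_criterion p hD0).mpr h)
  have hodd : p = 2 * (p / 2) + 1 :=
    (Nat.two_mul_div_two_add_one_of_odd ((Fact.out : p.Prime).odd_of_ne_two hp2)).symm
  rw [congrArg (ω ^ ·) hodd, pow_succ, pow_mul, sq, omega_mul_omega_eq_algebraMap, map_zero,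
    zero_mul, add_zero, ← map_pow, hEuler, map_neg, map_one, neg_one_mul]

theorem pow_card_eq_star (hp2 : p ≠ 2) (hD : ¬IsSquare D) (z : QuadraticAlgebra (ZMod p) D 0) :
    z ^ p = star z := by
  have : CharP (QuadraticAlgebra (ZMod p) D 0) p :=
    charP_of_injective_algebraMap algebraMap_injective p
  have hz : z = algebraMap _ _ z.re + algebraMap _ _ z.im * ω := by ext <;> simp
  rw [hz, add_pow_char, mul_pow, ← map_pow, ← map_pow, ZMod.pow_card, ZMod.pow_card,
    omega_pow_card hp2 hD]
  ext <;> simp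

theorem pow_card_add_one_eq_norm (hp2 : p ≠ 2) (hD : ¬IsSquare D)
    (z : QuadraticAlgebra (ZMod p) D 0) : z ^ (p + 1) = algebraMap _ _ (norm z) := by
  rw [pow_succ, pow_card_eq_star hp2 hD, algebraMap_norm_eq_mul_star, mul_comm]

end PrimeField

section Reduction

variable {N p : ℕ} (hp : p.Prime) (hp2 : p ≠ 2) (hpN : p ∣ N) {D : ZMod N}
  (hD : ¬IsSquare (ZMod.castHom hpN (ZMod p) D))
include hp hp2 hD

theorem natCast_dvd_pow_add_one_sub_norm (z : QuadraticAlgebra (ZMod N) D 0) :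
    (p : QuadraticAlgebra (ZMod N) D 0) ∣ z ^ (p + 1) - algebraMap _ _ (norm z) := by
  have := Fact.mk hp
  refine natCast_dvd_of_map_castHom_eq_zero hpN rfl (map_zero _) ?_
  rw [map_sub, map_pow, map_algebraMap _ rfl (map_zero _), ← norm_map _ rfl (map_zero _),
    pow_card_add_one_eq_norm hp2 hD, sub_self]

theorem natCast_pow_dvd_pow_sub_one_of_norm_eq_one {e : ℕ} (he : e ≠ 0)
    {z : QuadraticAlgebra (ZMod N) D 0} (hz : norm z = 1) :
    ((p ^ e : ℕ) : QuadraticAlgebra (ZMod N) D 0) ∣ z ^ (p ^ (e - 1) * (p + 1)) - 1 := by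
  have h := dvd_sub_pow_of_dvd_sub (natCast_dvd_pow_add_one_sub_norm hp hp2 hpN hD z) (e - 1)
  rwa [hz, map_one, one_pow, ← pow_mul, mul_comm, Nat.sub_add_cancel (Nat.one_le_iff_ne_zero.2 he),
    ← Nat.cast_pow] at h

end Reduction

theorem norm_equivProd_symm {R : Type*} [CommRing R] (D : R) (P : R × R) :
    norm ((equivProd D 0).symm P) = P.1 ^ 2 - D * P.2 ^ 2 := by
  rw [norm_def, equivProd_symm_apply]
  ring

end QuadraticAlgebra

open QuadraticAlgebra

theorem pellPow_eq_equivProd_pow {R : Type*} [CommRing R] (D : R) (P : R × R) (n : ℕ) :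
    pellPow D P n = equivProd D 0 ((equivProd D 0).symm P ^ n) := by
  induction n with
  | zero => rfl
  | succ n ih =>
    rw [pellPow, ih, pow_succ']
    simp only [pellMul, equivProd, Equiv.coe_fn_mk, Equiv.coe_fn_symm_mk, re_mul, im_mul]
    ext <;> ring

/-- Let `p₁, …, p_r` be distinct odd primes, `e₁, …, e_r ≥ 1`, and
`N = ∏ pᵢ^{eᵢ}`. If `D ∈ ℤ/Nℤ` reduces to a non-square modulo every `pᵢ`, then every
point of the Pell conic over `ℤ/Nℤ` satisfies `(x,y)^{⊗Ψ(N)} = (1,0)`, where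
`Ψ(N) = ∏ pᵢ^{eᵢ−1}(pᵢ + 1)`. -/
theorem pellPow_psi_eq_one (r : ℕ) (p e : Fin r → ℕ) (hp : ∀ i, (p i).Prime)
    (hp2 : ∀ i, p i ≠ 2) (hinj : Function.Injective p) (he : ∀ i, 1 ≤ e i)
    (D : ZMod (∏ i, p i ^ e i))
    (hD : ∀ i, ∀ c : ZMod (p i), c ^ 2 ≠
      ZMod.castHom ((dvd_pow_self (p i) (Nat.one_le_iff_ne_zero.mp (he i))).trans
        (Finset.dvd_prod_of_mem (fun j => p j ^ e j) (Finset.mem_univ i))) (ZMod (p i)) D) :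
    ∀ P ∈ pellConic D, pellPow D P (∏ i, p i ^ (e i - 1) * (p i + 1)) = (1, 0) := by
  intro P hP
  suffices (equivProd D 0).symm P ^ (∏ i, p i ^ (e i - 1) * (p i + 1)) = 1 by
    rw [pellPow_eq_equivProd_pow, this]; rfl
  rw [← sub_eq_zero]
  refine eq_zero_of_forall_natCast_dvd (fun i => p i ^ e i) ?_ ?_ fun i => ?_
  · exact fun i j hij =>
      Nat.Coprime.pow _ _ ((Nat.coprime_primes (hp i) (hp j)).2 (hinj.ne hij))
  · rw [← map_natCast (algebraMap (ZMod (∏ i, p i ^ e i)) _), ZMod.natCast_self, map_zero]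
  · have hpN : p i ∣ ∏ j, p j ^ e j := (dvd_pow_self _ (Nat.one_le_iff_ne_zero.mp (he i))).trans
      (Finset.dvd_prod_of_mem _ (Finset.mem_univ i))
    have hDi : ¬IsSquare (ZMod.castHom hpN (ZMod (p i)) D) :=
      fun ⟨c, hc⟩ => hD i c (by rw [hc, sq])
    obtain ⟨k, hk⟩ :=
      Finset.dvd_prod_of_mem (fun i => p i ^ (e i - 1) * (p i + 1)) (Finset.mem_univ i)
    rw [hk]
    exact (natCast_pow_dvd_pow_sub_one_of_norm_eq_one (hp i) (hp2 i) hpN hDi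
      (Nat.one_le_iff_ne_zero.mp (he i)) ((norm_equivProd_symm D P).trans hP)).trans
      (pow_one_sub_dvd_pow_mul_sub_one _ _ _)
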